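/- Let n ≥ 2 and let m be an integer with 0 ≤ m ≤ n. Then for every r ∈ ℝⁿ and all k, l ∈ {1,…,n}, (𝒢_m)^{kl}(φ(r)) = Σ_{i,j=1}ⁿ (∂φ^k/∂r^i)(∂φ^l/∂r^j) (δ^{i+j}_{n−m+1} + δ^{i+j}_{2n−m+1}); that is, in the coordinates r the contravariant metric 𝒢_m becomes the constant matrix with entries δ^{k+l}_{n−m+1} + δ^{k+l}_{2n−m+1}, so the r^i are flat coordinates for 𝒢_m. -/

import Mathlib

open Finset

noncomputable section

/-- Component of `v : Fin n → ℝ` with label `t ∈ {1,…,n}` (and `0` otherwise). -/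
def get (n : ℕ) (v : Fin n → ℝ) (t : ℕ) : ℝ :=
  if h : 1 ≤ t ∧ t ≤ n then v ⟨t - 1, by omega⟩ else 0

/-- The unit vector in `Fin n → ℝ` with label `i ∈ {1,…,n}`. -/
def evec (n i : ℕ) : Fin n → ℝ := fun t => if (t : ℕ) + 1 = i then 1 else 0

/-- The map `φ : ℝⁿ → ℝⁿ`, `r ↦ q`, given by
`q^i = r^i + ¼ Σ_{j=1}^{i-1} r^j r^{i-j}` for `i = 1,…,n-m` and
`q^i = −¼ Σ_{j=i}^{n} r^j r^{n-j+i}` for `i = n-m+1,…,n`. -/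
def phi (n m : ℕ) (r : Fin n → ℝ) : Fin n → ℝ := fun i =>
  if (i : ℕ) + 1 ≤ n - m then
    r i + (1/4) * ∑ j ∈ Finset.Icc 1 ((i : ℕ) + 1 - 1), get n r j * get n r ((i : ℕ) + 1 - j)
  else
    -(1/4) * ∑ j ∈ Finset.Icc ((i : ℕ) + 1) n, get n r j * get n r (n - j + ((i : ℕ) + 1))

/-- The explicit matrix form `𝒢_m` of the contravariant metric `G_m` in the
coordinates `q¹,…,qⁿ` (entries labelled by `r, s ∈ {1,…,n}`). -/
def Gmat (n m : ℕ) (q : ℕ → ℝ) (r s : ℕ) : ℝ :=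
  if 1 ≤ r ∧ r ≤ n - m ∧ 1 ≤ s ∧ s ≤ n - m then
    (if r + s = n - m + 1 then 1 else 0) +
      ∑ j ∈ Finset.Icc 1 (n - m - 1), q j * (if r + s = n - m + j + 1 then 1 else 0)
  else if n - m + 1 ≤ r ∧ r ≤ n ∧ n - m + 1 ≤ s ∧ s ≤ n then
    -∑ j ∈ Finset.Icc (n - m + 1) n, q j * (if r + s = n - m + j + 1 then 1 else 0)
  else 0

def gl (n j : ℕ) : (Fin n → ℝ) →L[ℝ] ℝ :=
  if h : 1 ≤ j ∧ j ≤ n then ContinuousLinearMap.proj ⟨j - 1, by omega⟩ else 0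
lemma gl_apply (n j : ℕ) (v : Fin n → ℝ) : gl n j v = get n v j := by
  unfold gl _root_.get; split_ifs <;> simp
lemma hasFDeriv_get (n j : ℕ) (r : Fin n → ℝ) :
    HasFDerivAt (fun v : Fin n → ℝ => _root_.get n v j) (gl n j) r := by
  have h : (fun v : Fin n → ℝ => _root_.get n v j) = gl n j := by
    funext v; rw [gl_apply]
  rw [h]; exact (gl n j).hasFDerivAt
lemma gl_evec (n j i : ℕ) (hj1 : 1 ≤ j) (hj2 : j ≤ n) :
    gl n j (evec n i) = if j = i then 1 else 0 := by
  unfold gl evec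
  rw [dif_pos ⟨hj1, hj2⟩]
  simp only [ContinuousLinearMap.proj_apply]
  congr 1
  simp only [eq_iff_iff]
  omega
lemma get_phi (n m : ℕ) (v : Fin n → ℝ) (k : ℕ) (hk1 : 1 ≤ k) (hk2 : k ≤ n) :
    get n (phi n m v) k =
      if k ≤ n - m then
        get n v k + (1/4) * ∑ j ∈ Icc 1 (k-1), get n v j * get n v (k - j)
      else -(1/4) * ∑ j ∈ Icc k n, get n v j * get n v (n - j + k) := by
  rw [show _root_.get n v k = v ⟨k-1, by omega⟩ from dif_pos ⟨hk1, hk2⟩]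
  unfold _root_.get phi
  rw [dif_pos ⟨hk1, hk2⟩]
  simp only [Nat.add_sub_cancel, Nat.sub_add_cancel hk1]
  rfl

lemma myIteCongr (P Q : Prop) [Decidable P] [Decidable Q] (a b : ℝ)
    (h : P ↔ Q) (hv : Q → a = b) : (if P then a else 0) = (if Q then b else 0) := by
  split_ifs with h1 h2
  · exact hv h2
  · exact absurd (h.mp h1) h2
  · exact absurd (h.mpr ‹Q›) h1
  · rfl

lemma fderiv_phi (n m : ℕ) (r : Fin n → ℝ) (k i : ℕ)
    (hk1 : 1 ≤ k) (hk2 : k ≤ n) (hi1 : 1 ≤ i) (hi2 : i ≤ n) :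
    fderiv ℝ (fun v => get n (phi n m v) k) r (evec n i) =
      if k ≤ n - m then
        (if k = i then 1 else 0) + (1/2) * (if i < k then get n r (k - i) else 0)
      else -((1/2) * (if k ≤ i then get n r (n - i + k) else 0)) := by
  have hfun : (fun v => _root_.get n (phi n m v) k) =
      fun v => if k ≤ n - m then
        _root_.get n v k + (1/4) * ∑ j ∈ Icc 1 (k-1), _root_.get n v j * _root_.get n v (k - j)
      else -(1/4) * ∑ j ∈ Icc k n, _root_.get n v j * _root_.get n v (n - j + k) := by
    funext v; exact get_phi n m v k hk1 hk2
  rw [hfun]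
  by_cases h : k ≤ n - m
  · simp only [if_pos h]
    have hd : HasFDerivAt
        (fun v : Fin n → ℝ => _root_.get n v k +
          (1/4) * ∑ j ∈ Icc 1 (k-1), _root_.get n v j * _root_.get n v (k - j))
        (gl n k + (1/4 : ℝ) • ∑ j ∈ Icc 1 (k-1),
          (_root_.get n r j • gl n (k-j) + _root_.get n r (k-j) • gl n j)) r := by
      exact (hasFDeriv_get n k r).add
        ((HasFDerivAt.fun_sum (fun j _ => (hasFDeriv_get n j r).fun_mul (hasFDeriv_get n (k-j) r))).const_mul (1/4))
    rw [hd.fderiv]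
    have e1 : gl n k (evec n i) = if k = i then 1 else 0 := gl_evec n k i hk1 hk2
    simp only [ContinuousLinearMap.add_apply, ContinuousLinearMap.coe_smul', Pi.smul_apply,
      ContinuousLinearMap.sum_apply, ContinuousLinearMap.smul_apply, e1, smul_eq_mul]
    have e2 : ∀ j ∈ Icc 1 (k-1),
        _root_.get n r j * gl n (k-j) (evec n i) + _root_.get n r (k-j) * gl n j (evec n i) =
        (if j = k - i then _root_.get n r (k-i) else 0) + (if j = i then _root_.get n r (k-i) else 0) := by
      intro j hj
      simp only [mem_Icc] at hj
      rw [gl_evec n (k-j) i (by omega) (by omega), gl_evec n j i (by omega) (by omega)]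
      rw [mul_ite, mul_one, mul_zero, mul_ite, mul_one, mul_zero]
      exact congrArg₂ (· + ·)
        (myIteCongr _ _ _ _ (by omega) (fun hq => by rw [hq]))
        (myIteCongr _ _ _ _ (by omega) (fun hq => by rw [hq]))
    rw [Finset.sum_congr rfl e2, Finset.sum_add_distrib, Finset.sum_ite_eq', Finset.sum_ite_eq']
    simp only [mem_Icc]
    split_ifs <;> (first | ring1 | (exfalso; omega))
  · simp only [if_neg h]
    have hd : HasFDerivAt
        (fun v : Fin n → ℝ => -(1/4) * ∑ j ∈ Icc k n, _root_.get n v j * _root_.get n v (n - j + k))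
        ((-(1/4) : ℝ) • ∑ j ∈ Icc k n,
          (_root_.get n r j • gl n (n-j+k) + _root_.get n r (n-j+k) • gl n j)) r := by
      exact (HasFDerivAt.fun_sum (fun j _ => (hasFDeriv_get n j r).fun_mul (hasFDeriv_get n (n-j+k) r))).const_mul (-(1/4))
    rw [hd.fderiv]
    simp only [ContinuousLinearMap.coe_smul', Pi.smul_apply, ContinuousLinearMap.add_apply,
      ContinuousLinearMap.smul_apply, ContinuousLinearMap.sum_apply, smul_eq_mul]
    have e2 : ∀ j ∈ Icc k n,
        _root_.get n r j * gl n (n-j+k) (evec n i) + _root_.get n r (n-j+k) * gl n j (evec n i) =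
        (if j = n + k - i then _root_.get n r (n-i+k) else 0) + (if j = i then _root_.get n r (n-i+k) else 0) := by
      intro j hj
      simp only [mem_Icc] at hj
      rw [gl_evec n (n-j+k) i (by omega) (by omega), gl_evec n j i (by omega) (by omega)]
      rw [mul_ite, mul_one, mul_zero, mul_ite, mul_one, mul_zero]
      refine congrArg₂ (· + ·)
        (myIteCongr _ _ _ _ (by omega) (fun hq => by rw [hq]; exact congrArg _ (by omega)))
        (myIteCongr _ _ _ _ (Iff.rfl) (fun hq => by rw [hq]))
    rw [Finset.sum_congr rfl e2, Finset.sum_add_distrib, Finset.sum_ite_eq', Finset.sum_ite_eq']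
    simp only [mem_Icc]
    split_ifs <;> (first | ring1 | (exfalso; omega))

lemma caseAB (n : ℕ) (hn : 2 ≤ n) (m : ℕ) (hm : m ≤ n) (r : Fin n → ℝ)
    (k l : ℕ) (hk1 : 1 ≤ k) (hk2 : k ≤ n) (hl1 : 1 ≤ l) (hl2 : l ≤ n)
    (hkN : k ≤ n - m) (hlN : ¬ l ≤ n - m) :
    Gmat n m (fun t => get n (phi n m r) t) k l =
      ∑ i ∈ Finset.Icc 1 n, ∑ j ∈ Finset.Icc 1 n,
        fderiv ℝ (fun v => get n (phi n m v) k) r (evec n i) *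
          fderiv ℝ (fun v => get n (phi n m v) l) r (evec n j) *
          ((if i + j = n - m + 1 then 1 else 0) +
            (if i + j = 2 * n - m + 1 then 1 else 0)) := by
  unfold Gmat
  rw [if_neg (fun h => hlN h.2.2.2), if_neg (fun h => absurd hkN (by omega))]
  symm
  refine Finset.sum_eq_zero (fun i hi => Finset.sum_eq_zero (fun j hj => ?_))
  simp only [mem_Icc] at hi hj
  rw [fderiv_phi n m r k i hk1 hk2 hi.1 hi.2, fderiv_phi n m r l j hl1 hl2 hj.1 hj.2,
    if_pos hkN, if_neg hlN]
  split_ifs <;> (first | ring1 | (exfalso; omega))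

lemma caseBA (n : ℕ) (hn : 2 ≤ n) (m : ℕ) (hm : m ≤ n) (r : Fin n → ℝ)
    (k l : ℕ) (hk1 : 1 ≤ k) (hk2 : k ≤ n) (hl1 : 1 ≤ l) (hl2 : l ≤ n)
    (hkN : ¬ k ≤ n - m) (hlN : l ≤ n - m) :
    Gmat n m (fun t => get n (phi n m r) t) k l =
      ∑ i ∈ Finset.Icc 1 n, ∑ j ∈ Finset.Icc 1 n,
        fderiv ℝ (fun v => get n (phi n m v) k) r (evec n i) *
          fderiv ℝ (fun v => get n (phi n m v) l) r (evec n j) *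
          ((if i + j = n - m + 1 then 1 else 0) +
            (if i + j = 2 * n - m + 1 then 1 else 0)) := by
  unfold Gmat
  rw [if_neg (fun h => hkN h.2.1), if_neg (fun h => absurd hlN (by omega))]
  symm
  refine Finset.sum_eq_zero (fun i hi => Finset.sum_eq_zero (fun j hj => ?_))
  simp only [mem_Icc] at hi hj
  rw [fderiv_phi n m r k i hk1 hk2 hi.1 hi.2, fderiv_phi n m r l j hl1 hl2 hj.1 hj.2,
    if_neg hkN, if_pos hlN]
  split_ifs <;> (first | ring1 | (exfalso; omega))

lemma delta_sum (n c i : ℕ) (B : ℕ → ℝ) :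
    ∑ j ∈ Icc 1 n, B j * (if i + j = c then (1:ℝ) else 0) =
      if i + 1 ≤ c ∧ c ≤ i + n then B (c - i) else 0 := by
  by_cases hc : i + 1 ≤ c
  · have h1 : ∀ j ∈ Icc 1 n, B j * (if i + j = c then (1:ℝ) else 0) =
        if j = c - i then B j else 0 := by
      intro j hj; simp only [mem_Icc] at hj
      rw [mul_ite, mul_one, mul_zero]
      exact myIteCongr _ _ _ _ (by omega) (fun _ => rfl)
    rw [Finset.sum_congr rfl h1, Finset.sum_ite_eq']
    simp only [mem_Icc]
    exact myIteCongr _ _ _ _ (by omega) (fun _ => rfl)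
  · rw [if_neg (by omega)]
    refine Finset.sum_eq_zero fun j hj => ?_
    simp only [mem_Icc] at hj
    rw [if_neg (by omega), mul_zero]

lemma double_collapse (n m : ℕ) (hm : m ≤ n) (A B : ℕ → ℝ) :
    (∑ i ∈ Icc 1 n, ∑ j ∈ Icc 1 n, A i * B j *
      ((if i + j = n - m + 1 then (1:ℝ) else 0) + (if i + j = 2 * n - m + 1 then 1 else 0))) =
    (∑ i ∈ Icc 1 (n - m), A i * B (n - m + 1 - i)) +
    (∑ i ∈ Icc (n - m + 1) n, A i * B (2 * n - m + 1 - i)) := by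
  have h1 : ∀ i ∈ Icc 1 n, (∑ j ∈ Icc 1 n, A i * B j *
      ((if i + j = n - m + 1 then (1:ℝ) else 0) + (if i + j = 2 * n - m + 1 then 1 else 0))) =
      A i * ((if i ≤ n - m then B (n - m + 1 - i) else 0) +
        (if n - m + 1 ≤ i then B (2 * n - m + 1 - i) else 0)) := by
    intro i hi; simp only [mem_Icc] at hi
    have h2 : (∑ j ∈ Icc 1 n, A i * B j *
        ((if i + j = n - m + 1 then (1:ℝ) else 0) + (if i + j = 2 * n - m + 1 then 1 else 0))) =
        (∑ j ∈ Icc 1 n, B j * (if i + j = n - m + 1 then (1:ℝ) else 0)) * A i +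
        (∑ j ∈ Icc 1 n, B j * (if i + j = 2 * n - m + 1 then (1:ℝ) else 0)) * A i := by
      rw [Finset.sum_mul, Finset.sum_mul, ← Finset.sum_add_distrib]
      exact Finset.sum_congr rfl fun j _ => by ring
    rw [h2, delta_sum, delta_sum,
      myIteCongr _ _ _ _ (show (i + 1 ≤ n - m + 1 ∧ n - m + 1 ≤ i + n) ↔ i ≤ n - m by omega)
        (fun _ => rfl),
      myIteCongr _ _ _ _ (show (i + 1 ≤ 2*n - m + 1 ∧ 2*n - m + 1 ≤ i + n) ↔ n - m + 1 ≤ i by omega)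
        (fun _ => rfl)]
    ring
  rw [Finset.sum_congr rfl h1]
  have h3 : ∀ i ∈ Icc 1 n, A i * ((if i ≤ n - m then B (n - m + 1 - i) else 0) +
      (if n - m + 1 ≤ i then B (2 * n - m + 1 - i) else 0)) =
      (if i ≤ n - m then A i * B (n - m + 1 - i) else 0) +
      (if n - m + 1 ≤ i then A i * B (2 * n - m + 1 - i) else 0) := by
    intro i _; split_ifs <;> ring1
  rw [Finset.sum_congr rfl h3, Finset.sum_add_distrib, ← Finset.sum_filter, ← Finset.sum_filter,
    show (Icc 1 n).filter (fun i => i ≤ n - m) = Icc 1 (n - m) from by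
      ext x; simp only [mem_filter, mem_Icc]; omega,
    show (Icc 1 n).filter (fun i => n - m + 1 ≤ i) = Icc (n - m + 1) n from by
      ext x; simp only [mem_filter, mem_Icc]; omega]

lemma caseAAcore (n N k l : ℕ) (hNn : N ≤ n) (hk1 : 1 ≤ k) (hkN : k ≤ N)
    (hl1 : 1 ≤ l) (hlN : l ≤ N) (g q : ℕ → ℝ)
    (hq : ∀ j, 1 ≤ j → j ≤ N - 1 →
      q j = g j + (1/4) * ∑ t ∈ Icc 1 (j-1), g t * g (j - t)) :
    (if k + l = N + 1 then (1:ℝ) else 0) +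
      ∑ j ∈ Icc 1 (N-1), q j * (if k + l = N + j + 1 then 1 else 0) =
    ∑ i ∈ Icc 1 N, ((if k = i then (1:ℝ) else 0) + (1/2) * (if i < k then g (k-i) else 0)) *
      ((if l = N+1-i then (1:ℝ) else 0) + (1/2) * (if N+1-i < l then g (l - (N+1-i)) else 0)) := by
  symm
  have e1 : ∀ i ∈ Icc 1 N,
      ((if k = i then (1:ℝ) else 0) + (1/2) * (if i < k then g (k-i) else 0)) *
        ((if l = N+1-i then (1:ℝ) else 0) + (1/2) * (if N+1-i < l then g (l - (N+1-i)) else 0)) =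
      (if k = i then ((if l = N+1-i then (1:ℝ) else 0) + (1/2) * (if N+1-i < l then g (l - (N+1-i)) else 0)) else 0) +
      (1/2) * (if i < k then g (k-i) * ((if l = N+1-i then (1:ℝ) else 0) + (1/2) * (if N+1-i < l then g (l - (N+1-i)) else 0)) else 0) := by
    intro i _; split_ifs <;> ring1
  rw [Finset.sum_congr rfl e1, Finset.sum_add_distrib, ← Finset.mul_sum,
    Finset.sum_ite_eq, if_pos (mem_Icc.mpr ⟨hk1, hkN⟩)]
  have e1b : ∀ i ∈ Icc 1 N, (if i < k then g (k-i) *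
      ((if l = N+1-i then (1:ℝ) else 0) + (1/2) * (if N+1-i < l then g (l - (N+1-i)) else 0)) else 0) =
      (if i < k then g (k-i) * ((if l = N+1-i then (1:ℝ) else 0) + (1/2) * (if N+1-i < l then g (l - (N+1-i)) else 0)) else 0) := fun i _ => rfl
  rw [← Finset.sum_filter, show (Icc 1 N).filter (fun i => i < k) = Icc 1 (k-1) from by
    ext x; simp only [mem_filter, mem_Icc]; omega]
  have e2 : ∀ i ∈ Icc 1 (k-1), g (k-i) *
      ((if l = N+1-i then (1:ℝ) else 0) + (1/2) * (if N+1-i < l then g (l - (N+1-i)) else 0)) =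
      (if i = N+1-l then g (k+l-N-1) else 0) +
      (1/2) * (if N+2-l ≤ i then g (k-i) * g (l+i-N-1) else 0) := by
    intro i hi; simp only [mem_Icc] at hi
    split_ifs <;>
      first
        | ring1
        | (exfalso; omega)
        | (rw [show k - i = k + l - N - 1 from by omega]; ring1)
        | (rw [show l - (N+1-i) = l + i - N - 1 from by omega]; ring1)
  rw [Finset.sum_congr rfl e2, Finset.sum_add_distrib, ← Finset.mul_sum, Finset.sum_ite_eq',
    ← Finset.sum_filter, show (Icc 1 (k-1)).filter (fun i => N+2-l ≤ i) = Icc (N+2-l) (k-1) from by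
      ext x; simp only [mem_filter, mem_Icc]; omega,
    show (∑ i ∈ Icc (N+2-l) (k-1), g (k-i) * g (l+i-N-1)) =
        ∑ t ∈ Icc 1 (k+l-N-1-1), g t * g (k+l-N-1-t) from
      Finset.sum_nbij' (fun i => k - i) (fun t => k - t)
        (fun a ha => by simp only [mem_Icc] at *; omega)
        (fun a ha => by simp only [mem_Icc] at *; omega)
        (fun a ha => by simp only [mem_Icc] at ha; show k - (k - a) = a; omega)
        (fun a ha => by simp only [mem_Icc] at ha; show k - (k - a) = a; omega)
        (fun a ha => by
          simp only [mem_Icc] at ha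
          rw [show l + a - N - 1 = k + l - N - 1 - (k - a) from by omega])]
  have e3 : ∀ j ∈ Icc 1 (N-1), q j * (if k + l = N + j + 1 then (1:ℝ) else 0) =
      if j = k+l-N-1 then (g (k+l-N-1) + (1/4) * ∑ t ∈ Icc 1 (k+l-N-1-1), g t * g (k+l-N-1-t)) else 0 := by
    intro j hj; simp only [mem_Icc] at hj
    rw [mul_ite, mul_one, mul_zero]
    refine myIteCongr _ _ _ _ (by omega) (fun hv => ?_)
    rw [hv, hq (k+l-N-1) (by omega) (by omega)]
  rw [Finset.sum_congr rfl e3, Finset.sum_ite_eq']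
  simp only [mem_Icc]
  by_cases hc : N + 2 ≤ k + l
  · rw [if_neg (show ¬ l = N+1-k from by omega), if_pos (show N+1-k < l from by omega),
      if_pos (show 1 ≤ N+1-l ∧ N+1-l ≤ k-1 from by omega),
      if_pos (show 1 ≤ k+l-N-1 ∧ k+l-N-1 ≤ N-1 from by omega),
      if_neg (show ¬ k+l = N+1 from by omega),
      show l - (N+1-k) = k+l-N-1 from by omega]
    ring1
  · rw [if_neg (show ¬ N+1-k < l from by omega),
      if_neg (show ¬(1 ≤ N+1-l ∧ N+1-l ≤ k-1) from by omega),
      if_neg (show ¬(1 ≤ k+l-N-1 ∧ k+l-N-1 ≤ N-1) from by omega),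
      myIteCongr _ _ _ _ (show (l = N+1-k) ↔ (k+l = N+1) from by omega) (fun _ => rfl),
      show Icc 1 (k+l-N-1-1) = (∅ : Finset ℕ) from Icc_eq_empty (by omega), Finset.sum_empty]
    ring1

lemma caseBBcore (n m k l : ℕ) (hm : m ≤ n) (hk2 : k ≤ n) (hl2 : l ≤ n)
    (hkN : ¬ k ≤ n - m) (hlN : ¬ l ≤ n - m) (g q : ℕ → ℝ)
    (hq : ∀ j, n - m + 1 ≤ j → j ≤ n →
      q j = -(1/4) * ∑ t ∈ Icc j n, g t * g (n - t + j)) :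
    -(∑ j ∈ Icc (n-m+1) n, q j * (if k + l = n - m + j + 1 then (1:ℝ) else 0)) =
    (∑ i ∈ Icc 1 (n-m), (-((1/2) * (if k ≤ i then g (n-i+k) else 0))) *
      (-((1/2) * (if l ≤ n-m+1-i then g (n-(n-m+1-i)+l) else 0)))) +
    (∑ i ∈ Icc (n-m+1) n, (-((1/2) * (if k ≤ i then g (n-i+k) else 0))) *
      (-((1/2) * (if l ≤ 2*n-m+1-i then g (n-(2*n-m+1-i)+l) else 0)))) := by
  symm
  rw [show (∑ i ∈ Icc 1 (n-m), (-((1/2) * (if k ≤ i then g (n-i+k) else 0))) *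
      (-((1/2) * (if l ≤ n-m+1-i then g (n-(n-m+1-i)+l) else 0)))) = 0 from
    Finset.sum_eq_zero fun i hi => by
      simp only [mem_Icc] at hi
      rw [if_neg (by omega)]; ring1, zero_add]
  have e1 : ∀ i ∈ Icc (n-m+1) n, (-((1/2) * (if k ≤ i then g (n-i+k) else 0))) *
      (-((1/2) * (if l ≤ 2*n-m+1-i then g (n-(2*n-m+1-i)+l) else 0))) =
      (if k ≤ i ∧ i ≤ 2*n-m+1-l then g (n-i+k) * g (i+l-(n-m)-1) * (1/4) else 0) := by
    intro i hi; simp only [mem_Icc] at hi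
    rw [show n-(2*n-m+1-i)+l = i+l-(n-m)-1 from by omega]
    split_ifs <;> (first | ring1 | (exfalso; omega))
  rw [Finset.sum_congr rfl e1, ← Finset.sum_filter,
    show (Icc (n-m+1) n).filter (fun i => k ≤ i ∧ i ≤ 2*n-m+1-l) = Icc k (2*n-m+1-l) from by
      ext x; simp only [mem_filter, mem_Icc]; omega,
    show (∑ i ∈ Icc k (2*n-m+1-l), g (n-i+k) * g (i+l-(n-m)-1) * (1/4)) =
        ∑ t ∈ Icc (k+l-(n-m)-1) n, g t * g (n-t+(k+l-(n-m)-1)) * (1/4) from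
      Finset.sum_nbij' (fun i => n - i + k) (fun t => n + k - t)
        (fun a ha => by simp only [mem_Icc] at *; omega)
        (fun a ha => by simp only [mem_Icc] at *; omega)
        (fun a ha => by simp only [mem_Icc] at ha; show n + k - (n - a + k) = a; omega)
        (fun a ha => by simp only [mem_Icc] at ha; show n - (n + k - a) + k = a; omega)
        (fun a ha => by
          simp only [mem_Icc] at ha
          rw [show a + l - (n-m) - 1 = n - (n - a + k) + (k+l-(n-m)-1) from by omega])]
  have e3 : ∀ j ∈ Icc (n-m+1) n, q j * (if k + l = n - m + j + 1 then (1:ℝ) else 0) =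
      if j = k+l-(n-m)-1 then
        (-(1/4) * ∑ t ∈ Icc (k+l-(n-m)-1) n, g t * g (n-t+(k+l-(n-m)-1))) else 0 := by
    intro j hj; simp only [mem_Icc] at hj
    rw [mul_ite, mul_one, mul_zero]
    refine myIteCongr _ _ _ _ (by omega) (fun hv => ?_)
    rw [hv, hq (k+l-(n-m)-1) (by omega) (by omega)]
  rw [Finset.sum_congr rfl e3, Finset.sum_ite_eq']
  simp only [mem_Icc]
  by_cases hc : k + l - (n-m) - 1 ≤ n
  · rw [if_pos (by omega), ← Finset.sum_mul]
    ring1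
  · rw [if_neg (by omega),
      show Icc (k+l-(n-m)-1) n = (∅ : Finset ℕ) from Icc_eq_empty (by omega), Finset.sum_empty]
    ring1

lemma caseAA (n : ℕ) (hn : 2 ≤ n) (m : ℕ) (hm : m ≤ n) (r : Fin n → ℝ)
    (k l : ℕ) (hk1 : 1 ≤ k) (hk2 : k ≤ n) (hl1 : 1 ≤ l) (hl2 : l ≤ n)
    (hkN : k ≤ n - m) (hlN : l ≤ n - m) :
    Gmat n m (fun t => get n (phi n m r) t) k l =
      ∑ i ∈ Finset.Icc 1 n, ∑ j ∈ Finset.Icc 1 n,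
        fderiv ℝ (fun v => get n (phi n m v) k) r (evec n i) *
          fderiv ℝ (fun v => get n (phi n m v) l) r (evec n j) *
          ((if i + j = n - m + 1 then 1 else 0) +
            (if i + j = 2 * n - m + 1 then 1 else 0)) := by
  rw [show (∑ i ∈ Icc 1 n, ∑ j ∈ Icc 1 n,
        fderiv ℝ (fun v => get n (phi n m v) k) r (evec n i) *
          fderiv ℝ (fun v => get n (phi n m v) l) r (evec n j) *
          ((if i + j = n - m + 1 then (1:ℝ) else 0) +
            (if i + j = 2 * n - m + 1 then 1 else 0)))
      = ∑ i ∈ Icc 1 n, ∑ j ∈ Icc 1 n,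
          ((if k = i then (1:ℝ) else 0) + (1/2) * (if i < k then get n r (k-i) else 0)) *
          ((if l = j then (1:ℝ) else 0) + (1/2) * (if j < l then get n r (l-j) else 0)) *
          ((if i + j = n - m + 1 then (1:ℝ) else 0) +
            (if i + j = 2 * n - m + 1 then 1 else 0)) from
    Finset.sum_congr rfl fun i hi => Finset.sum_congr rfl fun j hj => by
      simp only [mem_Icc] at hi hj
      rw [fderiv_phi n m r k i hk1 hk2 hi.1 hi.2, fderiv_phi n m r l j hl1 hl2 hj.1 hj.2,
        if_pos hkN, if_pos hlN]]
  rw [double_collapse n m hm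
      (fun i => (if k = i then (1:ℝ) else 0) + (1/2) * (if i < k then get n r (k-i) else 0))
      (fun j => (if l = j then (1:ℝ) else 0) + (1/2) * (if j < l then get n r (l-j) else 0))]
  rw [show (∑ i ∈ Icc (n-m+1) n,
      ((if k = i then (1:ℝ) else 0) + (1/2) * (if i < k then get n r (k-i) else 0)) *
      ((if l = 2*n-m+1-i then (1:ℝ) else 0) +
        (1/2) * (if 2*n-m+1-i < l then get n r (l-(2*n-m+1-i)) else 0))) = 0 from
    Finset.sum_eq_zero fun i hi => by
      simp only [mem_Icc] at hi
      rw [if_neg (by omega), if_neg (by omega)]; ring1, add_zero]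
  unfold Gmat
  rw [if_pos ⟨hk1, hkN, hl1, hlN⟩]
  exact caseAAcore n (n-m) k l (by omega) hk1 hkN hl1 hlN (get n r)
    (fun t => get n (phi n m r) t)
    (fun j hj1 hj2 => by show _root_.get n (phi n m r) j = _; rw [get_phi n m r j hj1 (by omega), if_pos (by omega)])

lemma caseBB (n : ℕ) (hn : 2 ≤ n) (m : ℕ) (hm : m ≤ n) (r : Fin n → ℝ)
    (k l : ℕ) (hk1 : 1 ≤ k) (hk2 : k ≤ n) (hl1 : 1 ≤ l) (hl2 : l ≤ n)
    (hkN : ¬ k ≤ n - m) (hlN : ¬ l ≤ n - m) :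
    Gmat n m (fun t => get n (phi n m r) t) k l =
      ∑ i ∈ Finset.Icc 1 n, ∑ j ∈ Finset.Icc 1 n,
        fderiv ℝ (fun v => get n (phi n m v) k) r (evec n i) *
          fderiv ℝ (fun v => get n (phi n m v) l) r (evec n j) *
          ((if i + j = n - m + 1 then 1 else 0) +
            (if i + j = 2 * n - m + 1 then 1 else 0)) := by
  rw [show (∑ i ∈ Icc 1 n, ∑ j ∈ Icc 1 n,
        fderiv ℝ (fun v => get n (phi n m v) k) r (evec n i) *
          fderiv ℝ (fun v => get n (phi n m v) l) r (evec n j) *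
          ((if i + j = n - m + 1 then (1:ℝ) else 0) +
            (if i + j = 2 * n - m + 1 then 1 else 0)))
      = ∑ i ∈ Icc 1 n, ∑ j ∈ Icc 1 n,
          (-((1/2) * (if k ≤ i then get n r (n-i+k) else 0))) *
          (-((1/2) * (if l ≤ j then get n r (n-j+l) else 0))) *
          ((if i + j = n - m + 1 then (1:ℝ) else 0) +
            (if i + j = 2 * n - m + 1 then 1 else 0)) from
    Finset.sum_congr rfl fun i hi => Finset.sum_congr rfl fun j hj => by
      simp only [mem_Icc] at hi hj
      rw [fderiv_phi n m r k i hk1 hk2 hi.1 hi.2, fderiv_phi n m r l j hl1 hl2 hj.1 hj.2,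
        if_neg hkN, if_neg hlN]]
  rw [double_collapse n m hm
      (fun i => -((1/2) * (if k ≤ i then get n r (n-i+k) else 0)))
      (fun j => -((1/2) * (if l ≤ j then get n r (n-j+l) else 0)))]
  unfold Gmat
  rw [if_neg (fun h => hkN h.2.1), if_pos ⟨by omega, hk2, by omega, hl2⟩]
  exact caseBBcore n m k l hm hk2 hl2 hkN hlN (get n r)
    (fun t => get n (phi n m r) t)
    (fun j hj1 hj2 => by show _root_.get n (phi n m r) j = _; rw [get_phi n m r j (by omega) hj2, if_neg (by omega)])

/-- the `r^i` are flat coordinates for `𝒢_m`: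
`(𝒢_m)^{kl}(φ(r)) = Σ_{i,j} (∂φ^k/∂r^i)(∂φ^l/∂r^j)(δ^{i+j}_{n-m+1} + δ^{i+j}_{2n-m+1})`,
i.e. in the coordinates `r` the metric becomes the constant matrix
`δ^{k+l}_{n-m+1} + δ^{k+l}_{2n-m+1}`. -/
theorem flat_coordinates_for_Gm
    (n : ℕ) (hn : 2 ≤ n) (m : ℕ) (hm : m ≤ n)
    (r : Fin n → ℝ)
    (k l : ℕ) (hk : k ∈ Finset.Icc 1 n) (hl : l ∈ Finset.Icc 1 n) :
    Gmat n m (fun t => get n (phi n m r) t) k l =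
      ∑ i ∈ Finset.Icc 1 n, ∑ j ∈ Finset.Icc 1 n,
        fderiv ℝ (fun v => get n (phi n m v) k) r (evec n i) *
          fderiv ℝ (fun v => get n (phi n m v) l) r (evec n j) *
          ((if i + j = n - m + 1 then 1 else 0) +
            (if i + j = 2 * n - m + 1 then 1 else 0)) := by
  simp only [mem_Icc] at hk hl
  by_cases hkN : k ≤ n - m
  · by_cases hlN : l ≤ n - m
    · exact caseAA n hn m hm r k l hk.1 hk.2 hl.1 hl.2 hkN hlN
    · exact caseAB n hn m hm r k l hk.1 hk.2 hl.1 hl.2 hkN hlN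
  · by_cases hlN : l ≤ n - m
    · exact caseBA n hn m hm r k l hk.1 hk.2 hl.1 hl.2 hkN hlN
    · exact caseBB n hn m hm r k l hk.1 hk.2 hl.1 hl.2 hkN hlN
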